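/- Let u be a classical solution of the forward problem. Then for every t ∈ [0, T], ρ₀ ∫₀^ℓ (∂ₜu(x,t))² dx + r₀ ∫₀^ℓ (∂ₓₓu(x,t))² dx + 2κ₀ ∫₀^t ∫₀^ℓ (∂ₓₓ∂ₜu(x,τ))² dx dτ ≤ ∫₀^t ∫₀^ℓ (∂ₜu(x,τ))² dx dτ + ∫₀^T ∫₀^ℓ F(x,τ)² dx dτ. -/

import Mathlib

open Set

/-!
Energy method. The energy density `e = ρ_A uₜ² + T_r uₓ² + r uₓₓ²` vanishes at `t = 0`.
Multiplying the equation by `2 uₜ` and integrating by parts three times in `x` gives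
`∫ ∂ₜe dx = ∫ 2 (F uₜ - μ uₜ² - κ uₓₓₜ²) dx`: the boundary terms vanish because `uₜ = 0` and the
bending moment `r uₓₓ + κ uₓₓₜ` is zero at both ends, and the integrations by parts need
`∂ₓ uₜ = uₓₜ` and `∂ₓ uₓₜ = uₓₓₜ`, which hold by symmetry of second derivatives of the smooth `u`.
Integrating in time, `e ≥ ρ₀ uₜ² + r₀ uₓₓ²` bounds the left side, while `2 F uₜ ≤ F² + uₜ²`,
`μ ≥ 0` and `κ ≥ κ₀` bound the right side.
-/

/-- A classical solution of the forward problem for the damped Euler–Bernoulli beam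
equation `ρ_A(x) uₜₜ + μ(x) uₜ − (T_r(x) uₓ)ₓ + (r(x) uₓₓ + κ(x) uₓₓₜ)ₓₓ = F(x,t)` on
`(0,ℓ) × (0,T)`, with homogeneous initial conditions and simply supported boundary
conditions.  The fields `ux, uxx, ut, utt, uxt, uxxt` are the partial derivatives of
`u`, `Ax` is the spatial derivative of `T_r(x) uₓ`, and `Bx, Bxx` are the first and
second spatial derivatives of the bending moment `B(x,t) = r(x) uₓₓ + κ(x) uₓₓₜ`. -/
structure ForwardSol (ℓ T : ℝ) (ρA μ Tr r κ : ℝ → ℝ) (F : ℝ → ℝ → ℝ) where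
  u : ℝ → ℝ → ℝ
  ux : ℝ → ℝ → ℝ
  uxx : ℝ → ℝ → ℝ
  ut : ℝ → ℝ → ℝ
  utt : ℝ → ℝ → ℝ
  uxt : ℝ → ℝ → ℝ
  uxxt : ℝ → ℝ → ℝ
  Ax : ℝ → ℝ → ℝ
  Bx : ℝ → ℝ → ℝ
  Bxx : ℝ → ℝ → ℝ
  smooth : ContDiffOn ℝ (⊤ : ℕ∞) (fun p : ℝ × ℝ => u p.1 p.2) (Icc 0 ℓ ×ˢ Icc 0 T)
  hux : ∀ x ∈ Icc (0:ℝ) ℓ, ∀ t ∈ Icc (0:ℝ) T, HasDerivAt (fun y => u y t) (ux x t) x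
  huxx : ∀ x ∈ Icc (0:ℝ) ℓ, ∀ t ∈ Icc (0:ℝ) T, HasDerivAt (fun y => ux y t) (uxx x t) x
  hut : ∀ x ∈ Icc (0:ℝ) ℓ, ∀ t ∈ Icc (0:ℝ) T, HasDerivAt (fun s => u x s) (ut x t) t
  hutt : ∀ x ∈ Icc (0:ℝ) ℓ, ∀ t ∈ Icc (0:ℝ) T, HasDerivAt (fun s => ut x s) (utt x t) t
  huxt : ∀ x ∈ Icc (0:ℝ) ℓ, ∀ t ∈ Icc (0:ℝ) T, HasDerivAt (fun s => ux x s) (uxt x t) t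
  huxxt : ∀ x ∈ Icc (0:ℝ) ℓ, ∀ t ∈ Icc (0:ℝ) T, HasDerivAt (fun s => uxx x s) (uxxt x t) t
  hAx : ∀ x ∈ Icc (0:ℝ) ℓ, ∀ t ∈ Icc (0:ℝ) T,
    HasDerivAt (fun y => Tr y * ux y t) (Ax x t) x
  hBx : ∀ x ∈ Icc (0:ℝ) ℓ, ∀ t ∈ Icc (0:ℝ) T,
    HasDerivAt (fun y => r y * uxx y t + κ y * uxxt y t) (Bx x t) x
  hBxx : ∀ x ∈ Icc (0:ℝ) ℓ, ∀ t ∈ Icc (0:ℝ) T, HasDerivAt (fun y => Bx y t) (Bxx x t) x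
  cont_ux : ContinuousOn (fun p : ℝ × ℝ => ux p.1 p.2) (Icc 0 ℓ ×ˢ Icc 0 T)
  cont_uxx : ContinuousOn (fun p : ℝ × ℝ => uxx p.1 p.2) (Icc 0 ℓ ×ˢ Icc 0 T)
  cont_ut : ContinuousOn (fun p : ℝ × ℝ => ut p.1 p.2) (Icc 0 ℓ ×ˢ Icc 0 T)
  cont_utt : ContinuousOn (fun p : ℝ × ℝ => utt p.1 p.2) (Icc 0 ℓ ×ˢ Icc 0 T)
  cont_uxt : ContinuousOn (fun p : ℝ × ℝ => uxt p.1 p.2) (Icc 0 ℓ ×ˢ Icc 0 T)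
  cont_uxxt : ContinuousOn (fun p : ℝ × ℝ => uxxt p.1 p.2) (Icc 0 ℓ ×ˢ Icc 0 T)
  cont_Ax : ContinuousOn (fun p : ℝ × ℝ => Ax p.1 p.2) (Icc 0 ℓ ×ˢ Icc 0 T)
  cont_Bx : ContinuousOn (fun p : ℝ × ℝ => Bx p.1 p.2) (Icc 0 ℓ ×ˢ Icc 0 T)
  cont_Bxx : ContinuousOn (fun p : ℝ × ℝ => Bxx p.1 p.2) (Icc 0 ℓ ×ˢ Icc 0 T)
  pde : ∀ x ∈ Ioo (0:ℝ) ℓ, ∀ t ∈ Ioo (0:ℝ) T,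
    ρA x * utt x t + μ x * ut x t - Ax x t + Bxx x t = F x t
  init_u : ∀ x ∈ Ioo (0:ℝ) ℓ, u x 0 = 0
  init_ut : ∀ x ∈ Ioo (0:ℝ) ℓ, ut x 0 = 0
  bc_u0 : ∀ t ∈ Icc (0:ℝ) T, u 0 t = 0
  bc_ul : ∀ t ∈ Icc (0:ℝ) T, u ℓ t = 0
  bc_m0 : ∀ t ∈ Icc (0:ℝ) T, r 0 * uxx 0 t + κ 0 * uxxt 0 t = 0
  bc_ml : ∀ t ∈ Icc (0:ℝ) T, r ℓ * uxx ℓ t + κ ℓ * uxxt ℓ t = 0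

open Filter Topology MeasureTheory

section PartialDerivatives

variable {E : Type*} [NormedAddCommGroup E] [NormedSpace ℝ E]

theorem HasFDerivAt.hasDerivAt_fst_slice {g : ℝ × ℝ → E} {g' : ℝ × ℝ →L[ℝ] E} {x t : ℝ}
    (h : HasFDerivAt g g' (x, t)) : HasDerivAt (fun y => g (y, t)) (g' (1, 0)) x :=
  h.comp_hasDerivAt x ((hasDerivAt_id x).prodMk (hasDerivAt_const x t))

theorem HasFDerivAt.hasDerivAt_snd_slice {g : ℝ × ℝ → E} {g' : ℝ × ℝ →L[ℝ] E} {x t : ℝ}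
    (h : HasFDerivAt g g' (x, t)) : HasDerivAt (fun τ => g (x, τ)) (g' (0, 1)) t :=
  h.comp_hasDerivAt t ((hasDerivAt_const t x).prodMk (hasDerivAt_id t))

variable {f fx ft : ℝ → ℝ → E} {s : Set (ℝ × ℝ)}

theorem eqOn_fderiv_fst (hf : DifferentiableOn ℝ (fun p : ℝ × ℝ => f p.1 p.2) s) (hs : IsOpen s)
    (hfx : ∀ p ∈ s, HasDerivAt (fun y => f y p.2) (fx p.1 p.2) p.1) :
    EqOn (fun p : ℝ × ℝ => fx p.1 p.2)
      (fun p => fderiv ℝ (fun p : ℝ × ℝ => f p.1 p.2) p (1, 0)) s := fun p hp =>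
  (hfx p hp).unique (hf.differentiableAt (hs.mem_nhds hp)).hasFDerivAt.hasDerivAt_fst_slice

theorem eqOn_fderiv_snd (hf : DifferentiableOn ℝ (fun p : ℝ × ℝ => f p.1 p.2) s) (hs : IsOpen s)
    (hft : ∀ p ∈ s, HasDerivAt (fun τ => f p.1 τ) (ft p.1 p.2) p.2) :
    EqOn (fun p : ℝ × ℝ => ft p.1 p.2)
      (fun p => fderiv ℝ (fun p : ℝ × ℝ => f p.1 p.2) p (0, 1)) s := fun p hp =>
  (hft p hp).unique (hf.differentiableAt (hs.mem_nhds hp)).hasFDerivAt.hasDerivAt_snd_slice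

theorem contDiffOn_partial_fst {m n : WithTop ℕ∞}
    (hf : ContDiffOn ℝ n (fun p : ℝ × ℝ => f p.1 p.2) s) (hs : IsOpen s) (hmn : m + 1 ≤ n)
    (hfx : ∀ p ∈ s, HasDerivAt (fun y => f y p.2) (fx p.1 p.2) p.1) :
    ContDiffOn ℝ m (fun p : ℝ × ℝ => fx p.1 p.2) s :=
  ((hf.fderiv_of_isOpen hs hmn).clm_apply contDiffOn_const).congr
    (eqOn_fderiv_fst (hf.differentiableOn (by rintro rfl; simp at hmn)) hs hfx)

theorem hasDerivAt_partial_comm {fxt : ℝ → ℝ → E} {x t : ℝ}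
    (hf : ContDiffOn ℝ 2 (fun p : ℝ × ℝ => f p.1 p.2) s) (hs : IsOpen s) (hp : (x, t) ∈ s)
    (hfx : ∀ p ∈ s, HasDerivAt (fun y => f y p.2) (fx p.1 p.2) p.1)
    (hft : ∀ p ∈ s, HasDerivAt (fun τ => f p.1 τ) (ft p.1 p.2) p.2)
    (hfxt : HasDerivAt (fun τ => fx x τ) (fxt x t) t) :
    HasDerivAt (fun y => ft y t) (fxt x t) x := by
  set g : ℝ × ℝ → E := fun p => f p.1 p.2
  have hg : ContDiffAt ℝ 2 g (x, t) := hf.contDiffAt (hs.mem_nhds hp)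
  set H := fderiv ℝ (fderiv ℝ g) (x, t)
  have hH : HasFDerivAt (fderiv ℝ g) H (x, t) :=
    ((hg.fderiv_right (m := 1) le_rfl).differentiableAt one_ne_zero).hasFDerivAt
  have hsymm : H (1, 0) (0, 1) = H (0, 1) (1, 0) := hg.isSymmSndFDerivAt (by simp) _ _
  have hg_diff : DifferentiableOn ℝ g s := hf.differentiableOn two_ne_zero
  have near_t : (fun τ => fx x τ) =ᶠ[𝓝 t] fun τ => fderiv ℝ g (x, τ) (1, 0) := by
    filter_upwards [(continuous_const.prodMk continuous_id).continuousAt.preimage_mem_nhds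
      (hs.mem_nhds hp)] with τ hτ using eqOn_fderiv_fst hg_diff hs hfx hτ
  have near_x : (fun y => ft y t) =ᶠ[𝓝 x] fun y => fderiv ℝ g (y, t) (0, 1) := by
    filter_upwards [(continuous_id.prodMk continuous_const).continuousAt.preimage_mem_nhds
      (hs.mem_nhds hp)] with y hy using eqOn_fderiv_snd hg_diff hs hft hy
  have hx : HasDerivAt (fun τ => fderiv ℝ g (x, τ) (1, 0)) (H (0, 1) (1, 0)) t := by
    simpa using hH.hasDerivAt_snd_slice.clm_apply (hasDerivAt_const t ((1 : ℝ), (0 : ℝ)))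
  have ht : HasDerivAt (fun y => fderiv ℝ g (y, t) (0, 1)) (H (1, 0) (0, 1)) x := by
    simpa using hH.hasDerivAt_fst_slice.clm_apply (hasDerivAt_const x ((0 : ℝ), (1 : ℝ)))
  rw [(near_t.hasDerivAt_iff.mp hfxt).unique hx, ← hsymm]
  exact near_x.hasDerivAt_iff.mpr ht

end PartialDerivatives

theorem HasDerivAt.eq_zero_of_eventuallyEq_zero {E : Type*} [NormedAddCommGroup E]
    [NormedSpace ℝ E] {f : ℝ → E} {f' : E} {x : ℝ} (hf : HasDerivAt f f' x)
    (h : f =ᶠ[𝓝 x] fun _ => 0) : f' = 0 :=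
  hf.unique ((hasDerivAt_const x 0).congr_of_eventuallyEq h)

section RectangleIntegrals

variable {f : ℝ → ℝ → ℝ} {a b c d : ℝ}

theorem intervalIntegral_intervalIntegral_eq_setIntegral_prod (hab : a ≤ b) (hcd : c ≤ d)
    (hf : ContinuousOn (fun p : ℝ × ℝ => f p.1 p.2) (Icc a b ×ˢ Icc c d)) :
    ∫ x in a..b, ∫ y in c..d, f x y = ∫ p in Icc a b ×ˢ Icc c d, f p.1 p.2 := by
  rw [Measure.volume_eq_prod,
    setIntegral_prod _ (hf.integrableOn_compact (isCompact_Icc.prod isCompact_Icc)),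
    intervalIntegral.integral_of_le hab, integral_Icc_eq_integral_Ioc]
  simp only [intervalIntegral.integral_of_le hcd, integral_Icc_eq_integral_Ioc]

theorem intervalIntegral_intervalIntegral_swap (hab : a ≤ b) (hcd : c ≤ d)
    (hf : ContinuousOn (fun p : ℝ × ℝ => f p.1 p.2) (Icc a b ×ˢ Icc c d)) :
    ∫ x in a..b, ∫ y in c..d, f x y = ∫ y in c..d, ∫ x in a..b, f x y := by
  have hf' : ContinuousOn (fun q : ℝ × ℝ => f q.2 q.1) (Icc c d ×ˢ Icc a b) :=
    hf.comp continuous_swap.continuousOn fun _ hq => mk_mem_prod hq.2 hq.1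
  rw [intervalIntegral_intervalIntegral_eq_setIntegral_prod hab hcd hf,
    intervalIntegral_intervalIntegral_eq_setIntegral_prod hcd hab hf', Measure.volume_eq_prod,
    ← setIntegral_prod_swap]
  rfl

theorem integral_sub_eq_integral_integral_of_hasDerivAt {e D : ℝ → ℝ → ℝ} (hab : a ≤ b)
    (hcd : c ≤ d) (hD : ContinuousOn (fun p : ℝ × ℝ => D p.1 p.2) (Icc a b ×ˢ Icc c d))
    (he : ∀ x ∈ Icc a b, ∀ y ∈ Icc c d, HasDerivAt (e x) (D x y) y) :
    ∫ x in a..b, (e x d - e x c) = ∫ y in c..d, ∫ x in a..b, D x y := by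
  rw [← intervalIntegral_intervalIntegral_swap hab hcd hD]
  refine intervalIntegral.integral_congr fun x hx => ?_
  rw [uIcc_of_le hab] at hx
  refine (intervalIntegral.integral_eq_sub_of_hasDerivAt (fun y hy => he x hx y ?_)
    ((hD.uncurry_left x hx).intervalIntegrable_of_Icc hcd)).symm
  rwa [uIcc_of_le hcd] at hy

end RectangleIntegrals

theorem integral_deriv_mul_add_mul_deriv_eq_zero {u v u' v' : ℝ → ℝ} {a b : ℝ} (hab : a ≤ b)
    (hu : ContinuousOn u (Icc a b)) (hv : ContinuousOn v (Icc a b))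
    (hu' : ContinuousOn u' (Icc a b)) (hv' : ContinuousOn v' (Icc a b))
    (huu' : ∀ x ∈ Ioo a b, HasDerivAt u (u' x) x) (hvv' : ∀ x ∈ Ioo a b, HasDerivAt v (v' x) x)
    (ha : u a * v a = 0) (hb : u b * v b = 0) :
    ∫ x in a..b, u' x * v x + u x * v' x = 0 := by
  rw [← uIcc_of_le hab] at hu hv
  rw [intervalIntegral.integral_deriv_mul_eq_sub_of_hasDerivAt hu hv
    (by simpa [hab] using huu') (by simpa [hab] using hvv')
    (hu'.intervalIntegrable_of_Icc hab) (hv'.intervalIntegrable_of_Icc hab), ha, hb, sub_zero]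

theorem ContinuousOn.comp_fst_prod {X Y Z : Type*} [TopologicalSpace X] [TopologicalSpace Y]
    [TopologicalSpace Z] {f : X → Z} {s : Set X} (hf : ContinuousOn f s) (t : Set Y) :
    ContinuousOn (fun p : X × Y => f p.1) (s ×ˢ t) :=
  hf.comp continuousOn_fst fun _ hp => hp.1

theorem forall_mem_Ioo_prod_Ioo_of_forall_mem_Icc {P : ℝ → ℝ → Prop} {a b c d : ℝ}
    (h : ∀ x ∈ Icc a b, ∀ y ∈ Icc c d, P x y) : ∀ p ∈ Ioo a b ×ˢ Ioo c d, P p.1 p.2 :=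
  fun _ hp => h _ (Ioo_subset_Icc_self hp.1) _ (Ioo_subset_Icc_self hp.2)

namespace ForwardSol

variable {ℓ T : ℝ} {ρA μ Tr r κ : ℝ → ℝ} {F : ℝ → ℝ → ℝ} (sol : ForwardSol ℓ T ρA μ Tr r κ F)

theorem contDiffOn_interior :
    ContDiffOn ℝ (⊤ : ℕ∞) (fun p : ℝ × ℝ => sol.u p.1 p.2) (Ioo 0 ℓ ×ˢ Ioo 0 T) :=
  sol.smooth.mono (prod_mono Ioo_subset_Icc_self Ioo_subset_Icc_self)

theorem hasDerivAt_ut_x {x τ : ℝ} (hx : x ∈ Ioo 0 ℓ) (hτ : τ ∈ Ioo 0 T) :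
    HasDerivAt (fun y => sol.ut y τ) (sol.uxt x τ) x :=
  hasDerivAt_partial_comm (sol.contDiffOn_interior.of_le (WithTop.coe_le_coe.mpr le_top))
    (isOpen_Ioo.prod isOpen_Ioo) (mk_mem_prod hx hτ)
    (forall_mem_Ioo_prod_Ioo_of_forall_mem_Icc sol.hux)
    (forall_mem_Ioo_prod_Ioo_of_forall_mem_Icc sol.hut)
    (sol.huxt x (Ioo_subset_Icc_self hx) τ (Ioo_subset_Icc_self hτ))

theorem hasDerivAt_uxt_x {x τ : ℝ} (hx : x ∈ Ioo 0 ℓ) (hτ : τ ∈ Ioo 0 T) :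
    HasDerivAt (fun y => sol.uxt y τ) (sol.uxxt x τ) x :=
  hasDerivAt_partial_comm
    (contDiffOn_partial_fst sol.contDiffOn_interior (isOpen_Ioo.prod isOpen_Ioo)
      (WithTop.coe_le_coe.mpr le_top) (forall_mem_Ioo_prod_Ioo_of_forall_mem_Icc sol.hux))
    (isOpen_Ioo.prod isOpen_Ioo) (mk_mem_prod hx hτ)
    (forall_mem_Ioo_prod_Ioo_of_forall_mem_Icc sol.huxx)
    (forall_mem_Ioo_prod_Ioo_of_forall_mem_Icc sol.huxt)
    (sol.huxxt x (Ioo_subset_Icc_self hx) τ (Ioo_subset_Icc_self hτ))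

theorem ux_initial (hT : 0 ≤ T) {x : ℝ} (hx : x ∈ Ioo 0 ℓ) : sol.ux x 0 = 0 :=
  (sol.hux x (Ioo_subset_Icc_self hx) 0 ⟨le_rfl, hT⟩).eq_zero_of_eventuallyEq_zero
    (eventually_of_mem (isOpen_Ioo.mem_nhds hx) sol.init_u)

theorem uxx_initial (hT : 0 ≤ T) {x : ℝ} (hx : x ∈ Ioo 0 ℓ) : sol.uxx x 0 = 0 :=
  (sol.huxx x (Ioo_subset_Icc_self hx) 0 ⟨le_rfl, hT⟩).eq_zero_of_eventuallyEq_zero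
    (eventually_of_mem (isOpen_Ioo.mem_nhds hx) fun _ hy => sol.ux_initial hT hy)

theorem ut_left (hℓ : 0 ≤ ℓ) {τ : ℝ} (hτ : τ ∈ Ioo 0 T) : sol.ut 0 τ = 0 :=
  (sol.hut 0 ⟨le_rfl, hℓ⟩ τ (Ioo_subset_Icc_self hτ)).eq_zero_of_eventuallyEq_zero
    (eventually_of_mem (isOpen_Ioo.mem_nhds hτ) fun _ hs => sol.bc_u0 _ (Ioo_subset_Icc_self hs))

theorem ut_right (hℓ : 0 ≤ ℓ) {τ : ℝ} (hτ : τ ∈ Ioo 0 T) : sol.ut ℓ τ = 0 :=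
  (sol.hut ℓ ⟨hℓ, le_rfl⟩ τ (Ioo_subset_Icc_self hτ)).eq_zero_of_eventuallyEq_zero
    (eventually_of_mem (isOpen_Ioo.mem_nhds hτ) fun _ hs => sol.bc_ul _ (Ioo_subset_Icc_self hs))

def energyDensity (x t : ℝ) : ℝ :=
  ρA x * sol.ut x t ^ 2 + Tr x * sol.ux x t ^ 2 + r x * sol.uxx x t ^ 2

theorem continuousOn_energyDensity (hρA : ContinuousOn ρA (Icc 0 ℓ))
    (hTr : ContinuousOn Tr (Icc 0 ℓ)) (hr : ContinuousOn r (Icc 0 ℓ)) {t : ℝ}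
    (ht : t ∈ Icc 0 T) : ContinuousOn (fun x => sol.energyDensity x t) (Icc 0 ℓ) := by
  have cut := sol.cont_ut.uncurry_right t ht
  have cux := sol.cont_ux.uncurry_right t ht
  have cuxx := sol.cont_uxx.uncurry_right t ht
  unfold energyDensity
  fun_prop

theorem hasDerivAt_energyDensity {x t : ℝ} (hx : x ∈ Icc 0 ℓ) (ht : t ∈ Icc 0 T) :
    HasDerivAt (sol.energyDensity x) (2 * (ρA x * sol.ut x t * sol.utt x t
      + Tr x * sol.ux x t * sol.uxt x t + r x * sol.uxx x t * sol.uxxt x t)) t := by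
  have h := ((((sol.hutt x hx t ht).pow 2).const_mul (ρA x)).add
    (((sol.huxt x hx t ht).pow 2).const_mul (Tr x))).add
    (((sol.huxxt x hx t ht).pow 2).const_mul (r x))
  exact h.congr_deriv (by norm_num; ring)

theorem integral_tension_by_parts (hℓ : 0 ≤ ℓ) (hTr : ContinuousOn Tr (Icc 0 ℓ)) {τ : ℝ}
    (hτ : τ ∈ Ioo 0 T) :
    ∫ x in 0..ℓ, sol.Ax x τ * sol.ut x τ + Tr x * sol.ux x τ * sol.uxt x τ = 0 := by
  have hτ' := Ioo_subset_Icc_self hτ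
  exact integral_deriv_mul_add_mul_deriv_eq_zero hℓ
    (hTr.mul (sol.cont_ux.uncurry_right τ hτ')) (sol.cont_ut.uncurry_right τ hτ')
    (sol.cont_Ax.uncurry_right τ hτ') (sol.cont_uxt.uncurry_right τ hτ')
    (fun x hx => sol.hAx x (Ioo_subset_Icc_self hx) τ hτ') (fun _ hx => sol.hasDerivAt_ut_x hx hτ)
    (by rw [sol.ut_left hℓ hτ, mul_zero]) (by rw [sol.ut_right hℓ hτ, mul_zero])

theorem integral_shear_by_parts (hℓ : 0 ≤ ℓ) {τ : ℝ} (hτ : τ ∈ Ioo 0 T) :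
    ∫ x in 0..ℓ, sol.Bxx x τ * sol.ut x τ + sol.Bx x τ * sol.uxt x τ = 0 := by
  have hτ' := Ioo_subset_Icc_self hτ
  exact integral_deriv_mul_add_mul_deriv_eq_zero hℓ
    (sol.cont_Bx.uncurry_right τ hτ') (sol.cont_ut.uncurry_right τ hτ')
    (sol.cont_Bxx.uncurry_right τ hτ') (sol.cont_uxt.uncurry_right τ hτ')
    (fun x hx => sol.hBxx x (Ioo_subset_Icc_self hx) τ hτ')
    (fun _ hx => sol.hasDerivAt_ut_x hx hτ)
    (by rw [sol.ut_left hℓ hτ, mul_zero]) (by rw [sol.ut_right hℓ hτ, mul_zero])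

theorem integral_moment_by_parts (hℓ : 0 ≤ ℓ) (hr : ContinuousOn r (Icc 0 ℓ))
    (hκ : ContinuousOn κ (Icc 0 ℓ)) {τ : ℝ} (hτ : τ ∈ Ioo 0 T) :
    ∫ x in 0..ℓ, sol.Bx x τ * sol.uxt x τ
      + (r x * sol.uxx x τ + κ x * sol.uxxt x τ) * sol.uxxt x τ = 0 := by
  have hτ' := Ioo_subset_Icc_self hτ
  exact integral_deriv_mul_add_mul_deriv_eq_zero hℓ
    ((hr.mul (sol.cont_uxx.uncurry_right τ hτ')).add (hκ.mul (sol.cont_uxxt.uncurry_right τ hτ')))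
    (sol.cont_uxt.uncurry_right τ hτ')
    (sol.cont_Bx.uncurry_right τ hτ') (sol.cont_uxxt.uncurry_right τ hτ')
    (fun x hx => sol.hBx x (Ioo_subset_Icc_self hx) τ hτ')
    (fun _ hx => sol.hasDerivAt_uxt_x hx hτ)
    (by rw [sol.bc_m0 τ hτ', zero_mul]) (by rw [sol.bc_ml τ hτ', zero_mul])

theorem integral_energyDensity_deriv_eq (hℓ : 0 ≤ ℓ) (hμ : ContinuousOn μ (Icc 0 ℓ))
    (hTr : ContinuousOn Tr (Icc 0 ℓ)) (hr : ContinuousOn r (Icc 0 ℓ))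
    (hκ : ContinuousOn κ (Icc 0 ℓ))
    (hF : ContinuousOn (fun p : ℝ × ℝ => F p.1 p.2) (Icc 0 ℓ ×ˢ Icc 0 T)) {τ : ℝ}
    (hτ : τ ∈ Ioo 0 T) :
    ∫ x in 0..ℓ, 2 * (ρA x * sol.ut x τ * sol.utt x τ + Tr x * sol.ux x τ * sol.uxt x τ
        + r x * sol.uxx x τ * sol.uxxt x τ)
      = ∫ x in 0..ℓ, 2 * (F x τ * sol.ut x τ - μ x * sol.ut x τ ^ 2
        - κ x * sol.uxxt x τ ^ 2) := by
  have hτ' := Ioo_subset_Icc_self hτ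
  have cut := sol.cont_ut.uncurry_right τ hτ'
  have cux := sol.cont_ux.uncurry_right τ hτ'
  have cuxx := sol.cont_uxx.uncurry_right τ hτ'
  have cuxt := sol.cont_uxt.uncurry_right τ hτ'
  have cuxxt := sol.cont_uxxt.uncurry_right τ hτ'
  have cAx := sol.cont_Ax.uncurry_right τ hτ'
  have cBx := sol.cont_Bx.uncurry_right τ hτ'
  have cBxx := sol.cont_Bxx.uncurry_right τ hτ'
  have cF := hF.uncurry_right τ hτ'
  calc _ = ∫ x in 0..ℓ, 2 * (F x τ * sol.ut x τ - μ x * sol.ut x τ ^ 2 - κ x * sol.uxxt x τ ^ 2)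
          + (2 * (sol.Ax x τ * sol.ut x τ + Tr x * sol.ux x τ * sol.uxt x τ)
            - 2 * (sol.Bxx x τ * sol.ut x τ + sol.Bx x τ * sol.uxt x τ)
            + 2 * (sol.Bx x τ * sol.uxt x τ
              + (r x * sol.uxx x τ + κ x * sol.uxxt x τ) * sol.uxxt x τ)) :=
        intervalIntegral.integral_congr_Ioo_of_le hℓ fun x hx => by
          linear_combination 2 * sol.ut x τ * sol.pde x hx τ hτ
    _ = _ := by
      rw [intervalIntegral.integral_add, intervalIntegral.integral_add,
        intervalIntegral.integral_sub]
      · simp only [intervalIntegral.integral_const_mul, sol.integral_tension_by_parts hℓ hTr hτ,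
          sol.integral_shear_by_parts hℓ hτ, sol.integral_moment_by_parts hℓ hr hκ hτ]
        ring
      all_goals apply ContinuousOn.intervalIntegrable_of_Icc hℓ; fun_prop

theorem integral_energyDensity_initial (hℓ : 0 ≤ ℓ) (hT : 0 ≤ T) :
    ∫ x in 0..ℓ, sol.energyDensity x 0 = 0 := by
  rw [intervalIntegral.integral_congr_Ioo_of_le hℓ (g := fun _ => 0) fun x hx => by
    simp [energyDensity, sol.init_ut x hx, sol.ux_initial hT hx, sol.uxx_initial hT hx]]
  simp

theorem integral_energyDensity_eq (hℓ : 0 ≤ ℓ) (hρA : ContinuousOn ρA (Icc 0 ℓ))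
    (hμ : ContinuousOn μ (Icc 0 ℓ)) (hTr : ContinuousOn Tr (Icc 0 ℓ))
    (hr : ContinuousOn r (Icc 0 ℓ)) (hκ : ContinuousOn κ (Icc 0 ℓ))
    (hF : ContinuousOn (fun p : ℝ × ℝ => F p.1 p.2) (Icc 0 ℓ ×ˢ Icc 0 T)) {t : ℝ}
    (ht : t ∈ Icc 0 T) :
    ∫ x in 0..ℓ, sol.energyDensity x t
      = ∫ τ in 0..t, ∫ x in 0..ℓ, 2 * (F x τ * sol.ut x τ - μ x * sol.ut x τ ^ 2
        - κ x * sol.uxxt x τ ^ 2) := by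
  have hT : 0 ≤ T := ht.1.trans ht.2
  have hsub : Icc 0 ℓ ×ˢ Icc 0 t ⊆ Icc 0 ℓ ×ˢ Icc 0 T :=
    prod_mono subset_rfl (Icc_subset_Icc_right ht.2)
  have hrate : ContinuousOn (fun p : ℝ × ℝ => 2 * (ρA p.1 * sol.ut p.1 p.2 * sol.utt p.1 p.2
      + Tr p.1 * sol.ux p.1 p.2 * sol.uxt p.1 p.2 + r p.1 * sol.uxx p.1 p.2 * sol.uxxt p.1 p.2))
      (Icc 0 ℓ ×ˢ Icc 0 T) := by
    exact continuousOn_const.mul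
      ((((hρA.comp_fst_prod _).mul sol.cont_ut).mul sol.cont_utt).add
        (((hTr.comp_fst_prod _).mul sol.cont_ux).mul sol.cont_uxt) |>.add
        (((hr.comp_fst_prod _).mul sol.cont_uxx).mul sol.cont_uxxt))
  calc ∫ x in 0..ℓ, sol.energyDensity x t
      = ∫ x in 0..ℓ, (sol.energyDensity x t - sol.energyDensity x 0) := by
        rw [intervalIntegral.integral_sub
          ((sol.continuousOn_energyDensity hρA hTr hr ht).intervalIntegrable_of_Icc hℓ)
          ((sol.continuousOn_energyDensity hρA hTr hr ⟨le_rfl, hT⟩).intervalIntegrable_of_Icc hℓ),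
          sol.integral_energyDensity_initial hℓ hT, sub_zero]
    _ = _ := integral_sub_eq_integral_integral_of_hasDerivAt hℓ ht.1 (hrate.mono hsub)
        fun x hx τ hτ => sol.hasDerivAt_energyDensity hx (Icc_subset_Icc_right ht.2 hτ)
    _ = _ := intervalIntegral.integral_congr_Ioo_of_le ht.1 fun τ hτ =>
        sol.integral_energyDensity_deriv_eq hℓ hμ hTr hr hκ hF ⟨hτ.1, hτ.2.trans_le ht.2⟩

theorem integral_energyDensity_ge {ρ₀ r₀ : ℝ} (hℓ : 0 ≤ ℓ) (hρA : ContinuousOn ρA (Icc 0 ℓ))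
    (hTr : ContinuousOn Tr (Icc 0 ℓ)) (hr : ContinuousOn r (Icc 0 ℓ))
    (hρAb : ∀ x ∈ Icc 0 ℓ, ρ₀ ≤ ρA x) (hTrb : ∀ x ∈ Icc 0 ℓ, 0 ≤ Tr x)
    (hrb : ∀ x ∈ Icc 0 ℓ, r₀ ≤ r x) {t : ℝ} (ht : t ∈ Icc 0 T) :
    ρ₀ * (∫ x in 0..ℓ, sol.ut x t ^ 2) + r₀ * (∫ x in 0..ℓ, sol.uxx x t ^ 2)
      ≤ ∫ x in 0..ℓ, sol.energyDensity x t := by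
  have cut := sol.cont_ut.uncurry_right t ht
  have cuxx := sol.cont_uxx.uncurry_right t ht
  rw [← intervalIntegral.integral_const_mul, ← intervalIntegral.integral_const_mul,
    ← intervalIntegral.integral_add]
  · refine intervalIntegral.integral_mono_on hℓ ?_
      ((sol.continuousOn_energyDensity hρA hTr hr ht).intervalIntegrable_of_Icc hℓ) fun x hx => ?_
    · exact ContinuousOn.intervalIntegrable_of_Icc hℓ (by fun_prop)
    · have := mul_le_mul_of_nonneg_right (hρAb x hx) (sq_nonneg (sol.ut x t))
      have := mul_le_mul_of_nonneg_right (hrb x hx) (sq_nonneg (sol.uxx x t))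
      have := mul_nonneg (hTrb x hx) (sq_nonneg (sol.ux x t))
      simp only [energyDensity]
      linarith
  all_goals exact ContinuousOn.intervalIntegrable_of_Icc hℓ (by fun_prop)

end ForwardSol

theorem integral_integral_dissipation_le {v w F : ℝ → ℝ → ℝ} {μ κ : ℝ → ℝ} {a b c t T κ₀ : ℝ}
    (hab : a ≤ b) (hct : c ≤ t) (htT : t ≤ T)
    (hv : ContinuousOn (fun p : ℝ × ℝ => v p.1 p.2) (Icc a b ×ˢ Icc c T))
    (hw : ContinuousOn (fun p : ℝ × ℝ => w p.1 p.2) (Icc a b ×ˢ Icc c T))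
    (hF : ContinuousOn (fun p : ℝ × ℝ => F p.1 p.2) (Icc a b ×ˢ Icc c T))
    (hμ : ContinuousOn μ (Icc a b)) (hκ : ContinuousOn κ (Icc a b))
    (hμb : ∀ x ∈ Icc a b, 0 ≤ μ x) (hκb : ∀ x ∈ Icc a b, κ₀ ≤ κ x) :
    (∫ τ in c..t, ∫ x in a..b, 2 * (F x τ * v x τ - μ x * v x τ ^ 2 - κ x * w x τ ^ 2))
        + 2 * κ₀ * (∫ τ in c..t, ∫ x in a..b, w x τ ^ 2)
      ≤ (∫ τ in c..t, ∫ x in a..b, v x τ ^ 2) + ∫ τ in c..T, ∫ x in a..b, F x τ ^ 2 := by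
  have hsub : Icc a b ×ˢ Icc c t ⊆ Icc a b ×ˢ Icc c T :=
    prod_mono subset_rfl (Icc_subset_Icc_right htT)
  have to_setIntegral : ∀ {f : ℝ → ℝ → ℝ} {s : ℝ}, c ≤ s →
      ContinuousOn (fun p : ℝ × ℝ => f p.1 p.2) (Icc a b ×ˢ Icc c s) →
      ∫ τ in c..s, ∫ x in a..b, f x τ = ∫ p in Icc a b ×ˢ Icc c s, f p.1 p.2 := fun hs hf => by
    rw [← intervalIntegral_intervalIntegral_swap hab hs hf,
      intervalIntegral_intervalIntegral_eq_setIntegral_prod hab hs hf]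
  have integrable : ∀ {g : ℝ × ℝ → ℝ}, ContinuousOn g (Icc a b ×ˢ Icc c T) →
      IntegrableOn g (Icc a b ×ˢ Icc c T) := fun hg =>
    hg.integrableOn_compact (isCompact_Icc.prod isCompact_Icc)
  have hG : ContinuousOn (fun p : ℝ × ℝ => 2 * (F p.1 p.2 * v p.1 p.2 - μ p.1 * v p.1 p.2 ^ 2
      - κ p.1 * w p.1 p.2 ^ 2)) (Icc a b ×ˢ Icc c T) :=
    continuousOn_const.mul (((hF.mul hv).sub ((hμ.comp_fst_prod _).mul (hv.pow 2))).sub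
      ((hκ.comp_fst_prod _).mul (hw.pow 2)))
  have hv2 : ContinuousOn (fun p : ℝ × ℝ => v p.1 p.2 ^ 2) (Icc a b ×ˢ Icc c T) := hv.pow 2
  have hw2 : ContinuousOn (fun p : ℝ × ℝ => w p.1 p.2 ^ 2) (Icc a b ×ˢ Icc c T) := hw.pow 2
  have hF2 : ContinuousOn (fun p : ℝ × ℝ => F p.1 p.2 ^ 2) (Icc a b ×ˢ Icc c T) := hF.pow 2
  rw [to_setIntegral hct (hG.mono hsub), to_setIntegral hct (hw2.mono hsub),
    to_setIntegral hct (hv2.mono hsub), to_setIntegral (hct.trans htT) hF2,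
    ← integral_const_mul]
  calc _ = ∫ p in Icc a b ×ˢ Icc c t, 2 * (F p.1 p.2 * v p.1 p.2 - μ p.1 * v p.1 p.2 ^ 2
          - κ p.1 * w p.1 p.2 ^ 2) + 2 * κ₀ * w p.1 p.2 ^ 2 :=
        (integral_add ((integrable hG).mono_set hsub)
          (((integrable hw2).mono_set hsub).const_mul _)).symm
    _ ≤ ∫ p in Icc a b ×ˢ Icc c t, v p.1 p.2 ^ 2 + F p.1 p.2 ^ 2 := by
        refine setIntegral_mono_on
          (((integrable hG).add ((integrable hw2).const_mul _)).mono_set hsub)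
          (((integrable hv2).add (integrable hF2)).mono_set hsub)
          (measurableSet_Icc.prod measurableSet_Icc) fun p hp => ?_
        nlinarith [sq_nonneg (F p.1 p.2 - v p.1 p.2),
          mul_nonneg (hμb p.1 hp.1) (sq_nonneg (v p.1 p.2)),
          mul_nonneg (sub_nonneg.mpr (hκb p.1 hp.1)) (sq_nonneg (w p.1 p.2))]
    _ = (∫ p in Icc a b ×ˢ Icc c t, v p.1 p.2 ^ 2) + ∫ p in Icc a b ×ˢ Icc c t, F p.1 p.2 ^ 2 :=
        integral_add ((integrable hv2).mono_set hsub) ((integrable hF2).mono_set hsub)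
    _ ≤ _ := add_le_add_right (setIntegral_mono_set (integrable hF2)
          (.of_forall fun _ => sq_nonneg _) hsub.eventuallyLE) _

theorem main_integral_inequality_general
    (ℓ T ρ₀ r₀ κ₀ : ℝ) (hℓ : 0 < ℓ)
    (ρA μ Tr r κ : ℝ → ℝ) (F : ℝ → ℝ → ℝ)
    (hρA : ContDiffOn ℝ (⊤ : ℕ∞) ρA (Icc 0 ℓ))
    (hμ : ContDiffOn ℝ (⊤ : ℕ∞) μ (Icc 0 ℓ))
    (hTr : ContDiffOn ℝ (⊤ : ℕ∞) Tr (Icc 0 ℓ))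
    (hr : ContDiffOn ℝ (⊤ : ℕ∞) r (Icc 0 ℓ))
    (hκ : ContDiffOn ℝ (⊤ : ℕ∞) κ (Icc 0 ℓ))
    (hρAb : ∀ x ∈ Icc (0:ℝ) ℓ, ρ₀ ≤ ρA x)
    (hμb : ∀ x ∈ Icc (0:ℝ) ℓ, 0 ≤ μ x)
    (hTrb : ∀ x ∈ Icc (0:ℝ) ℓ, 0 ≤ Tr x)
    (hrb : ∀ x ∈ Icc (0:ℝ) ℓ, r₀ ≤ r x)
    (hκb : ∀ x ∈ Icc (0:ℝ) ℓ, κ₀ ≤ κ x)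
    (hF : ContinuousOn (fun p : ℝ × ℝ => F p.1 p.2) (Icc 0 ℓ ×ˢ Icc 0 T))
    (sol : ForwardSol ℓ T ρA μ Tr r κ F) :
    ∀ t ∈ Icc (0:ℝ) T,
      ρ₀ * (∫ x in (0:ℝ)..ℓ, (sol.ut x t) ^ 2)
        + r₀ * (∫ x in (0:ℝ)..ℓ, (sol.uxx x t) ^ 2)
        + 2 * κ₀ * (∫ τ in (0:ℝ)..t, ∫ x in (0:ℝ)..ℓ, (sol.uxxt x τ) ^ 2)
      ≤ (∫ τ in (0:ℝ)..t, ∫ x in (0:ℝ)..ℓ, (sol.ut x τ) ^ 2) + (∫ t in (0:ℝ)..T, ∫ x in (0:ℝ)..ℓ, (F x t) ^ 2) := by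
  intro t ht
  have energy := sol.integral_energyDensity_eq hℓ.le hρA.continuousOn hμ.continuousOn
    hTr.continuousOn hr.continuousOn hκ.continuousOn hF ht
  have lower := sol.integral_energyDensity_ge hℓ.le hρA.continuousOn hTr.continuousOn
    hr.continuousOn hρAb hTrb hrb ht
  have upper := integral_integral_dissipation_le hℓ.le ht.1 ht.2 sol.cont_ut sol.cont_uxxt hF
    hμ.continuousOn hκ.continuousOn hμb hκb
  linarith

/-- **Main integral inequality (8).** -/
theorem main_integral_inequality
    (ℓ T ρ₀ r₀ κ₀ : ℝ) (hℓ : 0 < ℓ) (hT : 0 < T)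
    (hρ₀ : 0 < ρ₀) (hr₀ : 0 < r₀) (hκ₀ : 0 < κ₀)
    (ρA μ Tr r κ : ℝ → ℝ) (F : ℝ → ℝ → ℝ)
    (hρA : ContDiffOn ℝ (⊤ : ℕ∞) ρA (Icc 0 ℓ))
    (hμ : ContDiffOn ℝ (⊤ : ℕ∞) μ (Icc 0 ℓ))
    (hTr : ContDiffOn ℝ (⊤ : ℕ∞) Tr (Icc 0 ℓ))
    (hr : ContDiffOn ℝ (⊤ : ℕ∞) r (Icc 0 ℓ))
    (hκ : ContDiffOn ℝ (⊤ : ℕ∞) κ (Icc 0 ℓ))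
    (hρAb : ∀ x ∈ Icc (0:ℝ) ℓ, ρ₀ ≤ ρA x)
    (hμb : ∀ x ∈ Icc (0:ℝ) ℓ, 0 ≤ μ x)
    (hTrb : ∀ x ∈ Icc (0:ℝ) ℓ, 0 ≤ Tr x)
    (hrb : ∀ x ∈ Icc (0:ℝ) ℓ, r₀ ≤ r x)
    (hκb : ∀ x ∈ Icc (0:ℝ) ℓ, κ₀ ≤ κ x)
    (hF : ContinuousOn (fun p : ℝ × ℝ => F p.1 p.2) (Icc 0 ℓ ×ˢ Icc 0 T))
    (sol : ForwardSol ℓ T ρA μ Tr r κ F) :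
    ∀ t ∈ Icc (0:ℝ) T,
      ρ₀ * (∫ x in (0:ℝ)..ℓ, (sol.ut x t) ^ 2)
        + r₀ * (∫ x in (0:ℝ)..ℓ, (sol.uxx x t) ^ 2)
        + 2 * κ₀ * (∫ τ in (0:ℝ)..t, ∫ x in (0:ℝ)..ℓ, (sol.uxxt x τ) ^ 2)
      ≤ (∫ τ in (0:ℝ)..t, ∫ x in (0:ℝ)..ℓ, (sol.ut x τ) ^ 2) + (∫ t in (0:ℝ)..T, ∫ x in (0:ℝ)..ℓ, (F x t) ^ 2) :=
  main_integral_inequality_general ℓ T ρ₀ r₀ κ₀ hℓ ρA μ Tr r κ F hρA hμ hTr hr hκ hρAb hμb hTrb hrb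
    hκb hF sol
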